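/- The map w ↦ (P(w), Q(w)) is injective on words: a word w over a totally ordered alphabet is uniquely determined by the pair consisting of its binary search tree P(w) and its decreasing tree Q(w) = T(std(w)^{-1}). Moreover, restricted to permutations of {1,...,n}, the map σ ↦ (shape of P(σ), Q(σ)) is a bijection onto pairs (T, Q) where T is an unlabelled binary tree with n nodes and Q is a decreasing tree whose shape equals T. -/

import Mathlib

namespace Sylv

variable {α : Type*}

/-- Insert a letter into a binary search tree: left on `≤`, right on `>`. -/
def insert [LinearOrder α] (x : α) : Tree α → Tree α
  | BinaryTree.nil => BinaryTree.node x BinaryTree.nil BinaryTree.nil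
  | BinaryTree.node a l r =>
      if x ≤ a then BinaryTree.node a (Sylv.insert x l) r else BinaryTree.node a l (Sylv.insert x r)

/-- The binary search tree `P(w)`, inserting the letters of `w` from right to left. -/
def P [LinearOrder α] (w : List α) : Tree α := w.foldr Sylv.insert BinaryTree.nil

/-- Infix (in-order) reading of a labelled binary tree. -/
def inorder : Tree α → List α
  | BinaryTree.nil => []
  | BinaryTree.node a l r => inorder l ++ a :: inorder r

/-- Postfix (post-order) reading of a labelled binary tree. -/
def postorder : Tree α → List α
  | BinaryTree.nil => []
  | BinaryTree.node a l r => postorder l ++ postorder r ++ [a]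

/-- Binary search tree property: left labels `≤` root, right labels `>` root. -/
def IsBST [LinearOrder α] : Tree α → Prop
  | BinaryTree.nil => True
  | BinaryTree.node a l r =>
      (∀ x ∈ inorder l, x ≤ a) ∧ (∀ x ∈ inorder r, a < x) ∧ IsBST l ∧ IsBST r

/-- Shape (underlying unlabelled tree). -/
def shape : Tree α → Tree Unit
  | BinaryTree.nil => BinaryTree.nil
  | BinaryTree.node _ l r => BinaryTree.node () (shape l) (shape r)

/-- The sylvester congruence: the monoid congruence generated by
`z x u y ≡ x z u y` for letters `x ≤ y < z` and a word `u`. -/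
inductive SylvCong [LinearOrder α] : List α → List α → Prop
  | rel (p u q : List α) (x y z : α) (hxy : x ≤ y) (hyz : y < z) :
      SylvCong (p ++ z :: x :: u ++ y :: q) (p ++ x :: z :: u ++ y :: q)
  | refl (w : List α) : SylvCong w w
  | symm {u v} : SylvCong u v → SylvCong v u
  | trans {u v w} : SylvCong u v → SylvCong v w → SylvCong u w

/-- One rewriting step `x z u y → z x u y` (with `x ≤ y < z`), in any context. -/
inductive SylvStep [LinearOrder α] : List α → List α → Prop
  | step (p u q : List α) (x y z : α) (hxy : x ≤ y) (hyz : y < z) :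
      SylvStep (p ++ x :: z :: u ++ y :: q) (p ++ z :: x :: u ++ y :: q)

/-- Standardization of a word: values in `1..n`. -/
def std [LinearOrder α] [Inhabited α] (w : List α) : List ℕ :=
  (List.range w.length).map (fun i =>
    ((List.range w.length).filter (fun j =>
      w.getD j default < w.getD i default ∨
        (w.getD j default = w.getD i default ∧ j < i))).length + 1)

/-- Inverse of a permutation word of `1..n`. -/
def invPerm (s : List ℕ) : List ℕ :=
  (List.range s.length).map (fun j => s.idxOf (j + 1) + 1)

/-- `w` is a permutation word of `{1,…,n}`. -/
def IsPermWord (n : ℕ) (w : List ℕ) : Prop := w.Perm (List.range' 1 n)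

/-- Decreasing tree: every node's label exceeds all labels in its subtrees. -/
def IsDecreasing : Tree ℕ → Prop
  | BinaryTree.nil => True
  | BinaryTree.node a l r =>
      (∀ x ∈ inorder l, x < a) ∧ (∀ x ∈ inorder r, x < a) ∧ IsDecreasing l ∧ IsDecreasing r

/-- `t` is the decreasing tree of the word `w` (unique when letters are distinct). -/
def IsDecrTreeOf (w : List ℕ) (t : Tree ℕ) : Prop := IsDecreasing t ∧ inorder t = w

/-- Label the nodes of an unlabelled tree in infix order, starting from `k`. -/
def labelFrom : Tree Unit → ℕ → Tree ℕ × ℕ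
  | BinaryTree.nil, k => (BinaryTree.nil, k)
  | BinaryTree.node _ l r, k =>
      let p := labelFrom l k
      let q := labelFrom r (p.2 + 1)
      (BinaryTree.node p.2 p.1 q.1, q.2)

/-- The canonical tree-word `w_T`: postfix reading of `T` labelled in infix order by `1..n`. -/
def treeWord (T : Tree Unit) : List ℕ := postorder (labelFrom T 1).1

/-- Shift all letters of a word by `k`. -/
def shift (k : ℕ) (w : List ℕ) : List ℕ := w.map (· + k)

/-- `IsShuffle u v w` : `w` appears in the shuffle product `u ⧢ v`. -/
inductive IsShuffle : List ℕ → List ℕ → List ℕ → Prop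
  | nil : IsShuffle [] [] []
  | left (a : ℕ) {u v w} : IsShuffle u v w → IsShuffle (a :: u) v (a :: w)
  | right (a : ℕ) {u v w} : IsShuffle u v w → IsShuffle u (a :: v) (a :: w)

/-- A model of the homogeneous components of `FQSym`: formal series on words,
encoded by their coefficient functions. -/
abbrev FQS := List ℕ → ℚ

/-- Product of noncommutative series: convolution over factorizations. -/
noncomputable def mulF (f g : FQS) : FQS := fun w =>
  ∑ i ∈ Finset.range (w.length + 1), f (w.take i) * g (w.drop i)

open Classical in
/-- `F_σ = ∑_{std w = σ⁻¹} w`. -/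
noncomputable def Fel (σ : List ℕ) : FQS := fun w =>
  if std w = invPerm σ then 1 else 0

open Classical in
/-- `P_T = ∑_{P(σ) = T} F_σ`. -/
noncomputable def Pel (T : Tree Unit) : FQS := fun w =>
  if ∃ σ, IsPermWord w.length σ ∧ shape (P σ) = T ∧ std w = invPerm σ then 1 else 0

/-- Inversions (by values) of a permutation word. -/
def InvV (w : List ℕ) : Set (ℕ × ℕ) :=
  {p | p.1 < p.2 ∧ p.1 ∈ w ∧ p.2 ∈ w ∧ w.idxOf p.2 < w.idxOf p.1}

/-- Right weak order on permutation words: inclusion of inversion sets. -/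
def weakLe (u v : List ℕ) : Prop := InvV u ⊆ InvV v

/-- Product of hook lengths of a binary tree. -/
def hookProd : Tree Unit → ℕ
  | BinaryTree.nil => 1
  | BinaryTree.node _ l r => (l.numNodes + r.numNodes + 1) * hookProd l * hookProd r

/-- Major index of a word: sum of descent positions (1-based). -/
def maj (w : List ℕ) : ℕ :=
  ∑ i ∈ Finset.range (w.length - 1),
    if w.getD (i + 1) 0 < w.getD i 0 then i + 1 else 0

/-- `[n]_q` as a polynomial. -/
noncomputable def qInt (n : ℕ) : Polynomial ℚ := ∑ i ∈ Finset.range n, Polynomial.X ^ i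

/-- `[n]_q!`. -/
noncomputable def qFact : ℕ → Polynomial ℚ
  | 0 => 1
  | n + 1 => qFact n * qInt (n + 1)

/-- `∏_{v ∈ T} q^{δ_v} [h_v]_q`. -/
noncomputable def qHook : Tree Unit → Polynomial ℚ
  | BinaryTree.nil => 1
  | BinaryTree.node _ l r =>
      Polynomial.X ^ r.numNodes * qInt (l.numNodes + r.numNodes + 1) * qHook l * qHook r

end Sylv

namespace Sylv
open List

variable {α : Type*} [LinearOrder α] [Inhabited α]

lemma sorted_mergeSort_le {α : Type*} [LinearOrder α] (w : List α) : (w.mergeSort (· ≤ ·)).Pairwise (· ≤ ·) := by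
  have hp := List.pairwise_mergeSort (le := fun x y : α => decide (x ≤ y))
    (fun a b c h1 h2 => by
      simp only [decide_eq_true_eq] at h1 h2 ⊢; exact le_trans h1 h2)
    (fun a b => by simpa using le_total a b) w
  exact hp.imp (fun {x y} h => by simpa using h)

lemma P_cons_aux (x : α) (w : List α) : P (x :: w) = Sylv.insert x (P w) := rfl

lemma inorder_insert_perm (x : α) (t : Tree α) :
    (inorder (Sylv.insert x t)).Perm (x :: inorder t) := by
  induction t with
  | nil => simp [Sylv.insert, inorder]
  | node a l r ihl ihr =>
    by_cases h : x ≤ a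
    · simp only [Sylv.insert, if_pos h, inorder]
      have h1 : (inorder (Sylv.insert x l) ++ a :: inorder r).Perm
          ((x :: inorder l) ++ a :: inorder r) := ihl.append_right _
      simpa using h1
    · simp only [Sylv.insert, if_neg h, inorder]
      have h1 : (inorder l ++ a :: inorder (Sylv.insert x r)).Perm
          (inorder l ++ a :: (x :: inorder r)) := ((ihr.cons a)).append_left _
      have h2 : ((inorder l ++ [a]) ++ x :: inorder r).Perm
          (x :: ((inorder l ++ [a]) ++ inorder r)) := List.perm_middle
      refine h1.trans ?_
      have e1 : inorder l ++ a :: (x :: inorder r) = (inorder l ++ [a]) ++ x :: inorder r := by simp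
      have e2 : x :: ((inorder l ++ [a]) ++ inorder r) = x :: (inorder l ++ a :: inorder r) := by simp
      rw [e1]; exact e2 ▸ h2

lemma inorder_P_perm (w : List α) : (inorder (P w)).Perm w := by
  induction w with
  | nil => simp [P, inorder]
  | cons x w ih => exact (inorder_insert_perm x (P w)).trans (ih.cons x)

lemma P_concat (u : List α) (p : α) :
    P (u ++ [p]) = Tree.node p (P (u.filter (fun x => x ≤ p)))
      (P (u.filter (fun x => ¬ x ≤ p))) := by
  induction u with
  | nil => simp [P, Sylv.insert]
  | cons x u ih =>
    by_cases h : x ≤ p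
    · simp only [List.cons_append, P_cons_aux, ih, Sylv.insert, if_pos h, List.filter_cons,
        decide_eq_true_eq, h, if_pos, decide_not]
      simp [h, P_cons_aux]
    · simp only [List.cons_append, P_cons_aux, ih, Sylv.insert, if_neg h, List.filter_cons,
        decide_eq_true_eq, h, decide_not]
      simp [h, P_cons_aux]

def tmap (f : ℕ → ℕ) : Tree ℕ → Tree ℕ
  | BinaryTree.nil => BinaryTree.nil
  | BinaryTree.node a l r => BinaryTree.node (f a) (tmap f l) (tmap f r)

lemma shapeTmap (f : ℕ → ℕ) (t : Tree ℕ) : shape (tmap f t) = shape t := by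
  induction t with
  | nil => rfl
  | node a l r ihl ihr => simp [tmap, shape, ihl, ihr]

lemma insertTmap (k x : ℕ) (t : Tree ℕ) :
    Sylv.insert (x + k) (tmap (· + k) t) = tmap (· + k) (Sylv.insert x t) := by
  induction t with
  | nil => rfl
  | node a l r ihl ihr =>
    by_cases h : x ≤ a
    · simp [tmap, Sylv.insert, h, Nat.add_le_add_iff_right, ihl]
    · simp [tmap, Sylv.insert, h, Nat.add_le_add_iff_right, ihr]

lemma P_map_add (k : ℕ) (w : List ℕ) :
    P (w.map (· + k)) = tmap (· + k) (P w) := by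
  induction w with
  | nil => rfl
  | cons x w ih => simp only [List.map_cons, P_cons_aux, ih, insertTmap]

lemma countP_or_disjoint {β : Type*} (p q : β → Prop) [DecidablePred p] [DecidablePred q]
    (l : List β) (h : ∀ a ∈ l, ¬(p a ∧ q a)) :
    l.countP (fun a => decide (p a ∨ q a)) =
      l.countP (fun a => decide (p a)) + l.countP (fun a => decide (q a)) := by
  induction l with
  | nil => simp
  | cons x l ih =>
    have hx := h x (List.mem_cons_self)
    rw [List.countP_cons, List.countP_cons, List.countP_cons,
      ih (fun a ha => h a (List.mem_cons_of_mem _ ha))]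
    by_cases hp : p x <;> by_cases hq : q x
    · exact absurd ⟨hp, hq⟩ hx
    · simp [hp, hq]; omega
    · simp [hp, hq]; omega
    · simp [hp, hq]

lemma countP_range_getD {β : Type*} [Inhabited β] (w : List β) (p : β → Bool) :
    (List.range w.length).countP (fun j => p (w.getD j default)) = w.countP p := by
  induction w with
  | nil => simp
  | cons x w ih =>
    rw [List.length_cons, List.range_succ_eq_map, List.countP_cons, List.countP_map]
    have : ((fun j => p ((x :: w).getD j default)) ∘ Nat.succ)
        = fun j => p (w.getD j default) := by
      funext j; simp
    simp only [this, ih, List.getD_cons_zero, List.countP_cons]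
    try omega

lemma sorted_getD {β : Type*} [LinearOrder β] [Inhabited β] {s : List β}
    (hs : s.Pairwise (· ≤ ·)) (a : β) (k : ℕ)
    (h1 : s.countP (fun x => decide (x < a)) ≤ k)
    (h2 : k < s.countP (fun x => decide (x < a)) + s.countP (fun x => decide (x = a))) :
    s.getD k default = a := by
  induction s generalizing k with
  | nil => simp at h1 h2
  | cons b s ih =>
    rw [List.pairwise_cons] at hs
    obtain ⟨hb, hs⟩ := hs
    simp only [List.countP_cons, decide_eq_true_eq] at h1 h2
    rcases lt_trichotomy b a with hba | hba | hba
    · rw [if_pos hba, if_neg (ne_of_lt hba)] at h2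
      rw [if_pos hba] at h1
      cases k with
      | zero => omega
      | succ k' =>
        rw [List.getD_cons_succ]
        exact ih hs k' (by omega) (by omega)
    · subst hba
      have hz : s.countP (fun x => decide (x < b)) = 0 := by
        rw [List.countP_eq_zero]
        intro x hx
        simp only [decide_eq_true_eq]
        exact not_lt.2 (hb x hx)
      rw [if_neg (lt_irrefl b), if_pos (rfl : b = b), hz] at h2
      rw [if_neg (lt_irrefl b), hz] at h1
      cases k with
      | zero => rfl
      | succ k' =>
        rw [List.getD_cons_succ]
        exact ih hs k' (by omega) (by omega)
    · exfalso
      have hz1 : s.countP (fun x => decide (x < a)) = 0 := by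
        rw [List.countP_eq_zero]; intro x hx
        simp only [decide_eq_true_eq, not_lt]
        exact le_of_lt (lt_of_lt_of_le hba (hb x hx))
      have hz2 : s.countP (fun x => decide (x = a)) = 0 := by
        rw [List.countP_eq_zero]; intro x hx
        simp only [decide_eq_true_eq]
        intro hxa; subst hxa
        exact absurd (lt_of_lt_of_le hba (hb x hx)) (lt_irrefl x)
      rw [if_neg (not_lt.2 (le_of_lt hba)),
        if_neg (fun h' : b = a => absurd (h' ▸ hba) (lt_irrefl a)), hz1, hz2] at h2
      omega
/-- rank count -/
def cnt (w : List α) (i : ℕ) : ℕ :=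
  ((List.range w.length).filter (fun j =>
      w.getD j default < w.getD i default ∨
        (w.getD j default = w.getD i default ∧ j < i))).length

lemma std_eq (w : List α) : std w = (List.range w.length).map (fun i => cnt w i + 1) := rfl

lemma std_length (w : List α) : (std w).length = w.length := by simp [std]

lemma cnt_eq_countP (w : List α) (i : ℕ) :
    cnt w i = (List.range w.length).countP (fun j =>
      decide (w.getD j default < w.getD i default ∨
        (w.getD j default = w.getD i default ∧ j < i))) := by
  rw [cnt, ← List.countP_eq_length_filter]

/-- the strict "key" order -/
lemma cnt_lt_cnt (w : List α) {i j : ℕ} (hi : i < w.length) (hj : j < w.length)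
    (hrel : w.getD j default < w.getD i default ∨
      (w.getD j default = w.getD i default ∧ j < i)) :
    cnt w j < cnt w i := by
  have key : cnt w j + 1 ≤ cnt w i := by
    rw [cnt_eq_countP, cnt_eq_countP]
    have hdis : ∀ a ∈ List.range w.length,
        ¬((w.getD a default < w.getD j default ∨
            (w.getD a default = w.getD j default ∧ a < j)) ∧ a = j) := by
      rintro a _ ⟨h1, rfl⟩
      rcases h1 with h1 | ⟨_, h1⟩ <;> exact absurd h1 (by simp)
    have hsplit := countP_or_disjoint
      (fun a => w.getD a default < w.getD j default ∨
          (w.getD a default = w.getD j default ∧ a < j))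
      (fun a => a = j) (List.range w.length) hdis
    have hcj : (List.range w.length).countP (fun a => decide (a = j)) = 1 := by
      have e : (List.range w.length).countP (fun a => decide (a = j)) =
          (List.range w.length).count j := by
        apply List.countP_congr; intro x _; simp
      rw [e, List.count_eq_one_of_mem (List.nodup_range) (List.mem_range.2 hj)]
    calc (List.range w.length).countP (fun a =>
          decide (w.getD a default < w.getD j default ∨
            (w.getD a default = w.getD j default ∧ a < j))) + 1
        = (List.range w.length).countP (fun a =>
            decide ((w.getD a default < w.getD j default ∨
              (w.getD a default = w.getD j default ∧ a < j)) ∨ a = j)) := by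
          rw [hsplit, hcj]
      _ ≤ (List.range w.length).countP (fun a =>
            decide (w.getD a default < w.getD i default ∨
              (w.getD a default = w.getD i default ∧ a < i))) := by
          apply List.countP_mono_left
          intro a _ ha
          simp only [decide_eq_true_eq] at ha ⊢
          rcases ha with (ha | ⟨ha1, ha2⟩) | rfl
          · rcases hrel with hr | ⟨hr, _⟩
            · exact Or.inl (lt_trans ha hr)
            · exact Or.inl (hr ▸ ha)
          · rcases hrel with hr | ⟨hr1, hr2⟩
            · exact Or.inl (ha1 ▸ hr)
            · exact Or.inr ⟨ha1.trans hr1, ha2.trans hr2⟩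
          · exact hrel
  omega

lemma cnt_lt_length (w : List α) {i : ℕ} (hi : i < w.length) :
    cnt w i + 1 ≤ w.length := by
  rw [cnt_eq_countP]
  have hdis : ∀ a ∈ List.range w.length,
      ¬((w.getD a default < w.getD i default ∨
          (w.getD a default = w.getD i default ∧ a < i)) ∧ a = i) := by
    rintro a _ ⟨h1, rfl⟩
    rcases h1 with h1 | ⟨_, h1⟩ <;> exact absurd h1 (by simp)
  have hsplit := countP_or_disjoint
    (fun a => w.getD a default < w.getD i default ∨
        (w.getD a default = w.getD i default ∧ a < i))
    (fun a => a = i) (List.range w.length) hdis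
  have hci : (List.range w.length).countP (fun a => decide (a = i)) = 1 := by
    have e : (List.range w.length).countP (fun a => decide (a = i)) =
        (List.range w.length).count i := by
      apply List.countP_congr; intro x _; simp
    rw [e, List.count_eq_one_of_mem (List.nodup_range) (List.mem_range.2 hi)]
  calc (List.range w.length).countP (fun a =>
        decide (w.getD a default < w.getD i default ∨
          (w.getD a default = w.getD i default ∧ a < i))) + 1
      = (List.range w.length).countP (fun a =>
          decide ((w.getD a default < w.getD i default ∨
            (w.getD a default = w.getD i default ∧ a < i)) ∨ a = i)) := by
        rw [hsplit, hci]
    _ ≤ (List.range w.length).length := List.countP_le_length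
    _ = w.length := List.length_range

lemma std_getD (w : List α) {i : ℕ} (hi : i < w.length) :
    (std w).getD i 0 = cnt w i + 1 := by
  rw [std_eq, List.getD_eq_getElem _ _ (by simpa using hi)]
  simp

lemma std_isPermWord (w : List α) : IsPermWord w.length (std w) := by
  have hnd : (std w).Nodup := by
    rw [std_eq]
    refine List.Nodup.map_on ?_ List.nodup_range
    intro i hi j hj hij
    by_contra hne
    rw [List.mem_range] at hi hj
    have htot : (w.getD j default < w.getD i default ∨
          (w.getD j default = w.getD i default ∧ j < i)) ∨
        (w.getD i default < w.getD j default ∨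
          (w.getD i default = w.getD j default ∧ i < j)) := by
      rcases lt_trichotomy (w.getD j default) (w.getD i default) with h | h | h
      · exact Or.inl (Or.inl h)
      · rcases lt_or_gt_of_ne (Ne.symm hne) with h' | h'
        · exact Or.inl (Or.inr ⟨h, h'⟩)
        · exact Or.inr (Or.inr ⟨h.symm, h'⟩)
      · exact Or.inr (Or.inl h)
    rcases htot with h | h
    · exact absurd hij (by have := cnt_lt_cnt w hi hj h; omega)
    · exact absurd hij (by have := cnt_lt_cnt w hj hi h; omega)
  have hsub : std w ⊆ List.range' 1 w.length := by
    intro x hx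
    rw [std_eq, List.mem_map] at hx
    obtain ⟨i, hi, rfl⟩ := hx
    rw [List.mem_range] at hi
    rw [List.mem_range'_1]
    exact ⟨by omega, by have := cnt_lt_length w hi; omega⟩
  have hlen : (std w).length = (List.range' 1 w.length).length := by
    simp [std_length]
  exact (List.subperm_of_subset hnd hsub).perm_of_length_le (le_of_eq hlen.symm)

lemma std_recover (w : List α) {i : ℕ} (hi : i < w.length) :
    (w.mergeSort (· ≤ ·)).getD ((std w).getD i 0 - 1) default = w.getD i default := by
  rw [std_getD w hi, Nat.add_sub_cancel]
  set a := w.getD i default with ha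
  -- decompose cnt
  have hdis : ∀ j_1 ∈ List.range w.length,
      ¬(w.getD j_1 default < a ∧ (w.getD j_1 default = a ∧ j_1 < i)) := by
    rintro j _ ⟨h1, h2, _⟩; rw [h2] at h1; exact absurd h1 (lt_irrefl a)
  have hsplit : cnt w i =
      (List.range w.length).countP (fun j => decide (w.getD j default < a)) +
      (List.range w.length).countP (fun j => decide (w.getD j default = a ∧ j < i)) := by
    rw [cnt_eq_countP]
    exact countP_or_disjoint (fun j => w.getD j default < a)
      (fun j => w.getD j default = a ∧ j < i) _ hdis
  have hc1 : (List.range w.length).countP (fun j => decide (w.getD j default < a)) =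
      w.countP (fun x => decide (x < a)) := countP_range_getD w (fun x => decide (x < a))
  -- second summand
  have hc2 : (List.range w.length).countP (fun j => decide (w.getD j default = a ∧ j < i)) =
      (w.take i).countP (fun x => decide (x = a)) := by
    have hr : List.range w.length = List.range i ++ List.range' i (w.length - i) := by
      have e : w.length - i + i = w.length := by omega
      calc List.range w.length = List.range' 0 (w.length - i + i) := by
            rw [e, List.range_eq_range']
        _ = List.range' 0 i ++ List.range' (0 + 1 * i) (w.length - i) :=
            by rw [List.range'_append, Nat.add_comm]
        _ = List.range i ++ List.range' i (w.length - i) := by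
            simp [List.range_eq_range']
    rw [hr, List.countP_append]
    have hz : (List.range' i (w.length - i)).countP
        (fun j => decide (w.getD j default = a ∧ j < i)) = 0 := by
      rw [List.countP_eq_zero]
      intro j hj
      rw [List.mem_range'_1] at hj
      simp only [decide_eq_true_eq, not_and]
      intro _; omega
    rw [hz, Nat.add_zero]
    have htl : (w.take i).length = i := by
      rw [List.length_take]; omega
    have : (List.range i).countP (fun j => decide (w.getD j default = a ∧ j < i)) =
        (List.range (w.take i).length).countP
          (fun j => decide ((w.take i).getD j default = a)) := by
      rw [htl]
      apply List.countP_congr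
      intro j hj
      rw [List.mem_range] at hj
      have hjw : j < w.length := by omega
      have htj : (w.take i).getD j default = w.getD j default := by
        rw [List.getD_eq_getElem _ _ (by rw [htl]; exact hj),
          List.getD_eq_getElem _ _ hjw]
        exact List.getElem_take
      simp only [decide_eq_true_eq, htj]
      constructor
      · rintro ⟨h1, _⟩; exact h1
      · intro h1; exact ⟨h1, hj⟩
    rw [this]
    exact countP_range_getD (w.take i) (fun x => decide (x = a))
  have hlt : (w.take i).countP (fun x => decide (x = a)) <
      w.countP (fun x => decide (x = a)) := by
    conv_rhs => rw [← List.take_append_drop i w]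
    rw [List.countP_append, List.drop_eq_getElem_cons hi, List.countP_cons]
    have hwia : w[i] = a := by rw [ha, List.getD_eq_getElem w default hi]
    rw [hwia]
    simp
  have hsorted : (w.mergeSort (· ≤ ·)).Pairwise (· ≤ ·) := by
    have hp := List.pairwise_mergeSort (le := fun x y : α => decide (x ≤ y))
      (fun a b c h1 h2 => by
        simp only [decide_eq_true_eq] at h1 h2 ⊢; exact le_trans h1 h2)
      (fun a b => by simpa using le_total a b) w
    exact hp.imp (fun {x y} h => by simpa using h)
  have hperm := List.mergeSort_perm w (fun x y : α => decide (x ≤ y))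
  apply sorted_getD hsorted
  · rw [hperm.countP_eq, hsplit, hc1, hc2]
    omega
  · rw [hperm.countP_eq (fun x => decide (x < a)), hperm.countP_eq (fun x => decide (x = a)),
      hsplit, hc1, hc2]
    omega

lemma invPerm_length (s : List ℕ) : (invPerm s).length = s.length := by simp [invPerm]

lemma invPerm_getElem (s : List ℕ) (j : ℕ) (hj : j < (invPerm s).length) :
    (invPerm s)[j] = s.idxOf (j + 1) + 1 := by
  simp [invPerm]

lemma IsPermWord.len {n : ℕ} {w : List ℕ} (h : IsPermWord n w) : w.length = n := by
  simpa using h.length_eq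

lemma IsPermWord.nodup' {n : ℕ} {w : List ℕ} (h : IsPermWord n w) : w.Nodup :=
  (List.Perm.nodup_iff h).2 (List.nodup_range' (s := 1) (n := n))

lemma IsPermWord.mem_iff' {n : ℕ} {w : List ℕ} (h : IsPermWord n w) {x : ℕ} :
    x ∈ w ↔ 1 ≤ x ∧ x < 1 + n := by
  rw [h.mem_iff, List.mem_range'_1]

lemma invPerm_isPermWord {n : ℕ} {s : List ℕ} (h : IsPermWord n s) :
    IsPermWord n (invPerm s) := by
  have hlen : s.length = n := h.len
  have hnd : (invPerm s).Nodup := by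
    rw [invPerm]
    refine List.Nodup.map_on ?_ List.nodup_range
    intro j hj j' hj' hjj
    rw [List.mem_range] at hj hj'
    have hj1 : j + 1 ∈ s := h.mem_iff'.2 ⟨by omega, by omega⟩
    have hj1' : j' + 1 ∈ s := h.mem_iff'.2 ⟨by omega, by omega⟩
    have : j + 1 = j' + 1 := (List.idxOf_inj hj1).1 (by omega)
    omega
  have hsub : invPerm s ⊆ List.range' 1 n := by
    intro x hx
    rw [invPerm, List.mem_map] at hx
    obtain ⟨j, hj, rfl⟩ := hx
    rw [List.mem_range] at hj
    have hj1 : j + 1 ∈ s := h.mem_iff'.2 ⟨by omega, by omega⟩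
    have := List.idxOf_lt_length_iff.2 hj1
    rw [List.mem_range'_1]
    omega
  have hlen2 : (invPerm s).length = (List.range' 1 n).length := by
    simp [invPerm_length, hlen]
  exact (List.subperm_of_subset hnd hsub).perm_of_length_le (le_of_eq hlen2.symm)

lemma invPerm_invPerm {n : ℕ} {s : List ℕ} (h : IsPermWord n s) :
    invPerm (invPerm s) = s := by
  have hlen : s.length = n := h.len
  have hnd := h.nodup'
  have hnd2 := (invPerm_isPermWord h).nodup'
  apply List.ext_getElem (by simp [invPerm_length])
  intro j hj1 hj2
  rw [invPerm_getElem _ j hj1]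
  have hm : 1 ≤ s[j] ∧ s[j] < 1 + n := h.mem_iff'.1 (s.getElem_mem hj2)
  have hmlt : s[j] - 1 < (invPerm s).length := by rw [invPerm_length]; omega
  have e1 : (invPerm s)[s[j] - 1] = j + 1 := by
    rw [invPerm_getElem _ _ hmlt]
    have : s[j] - 1 + 1 = s[j] := by omega
    rw [this, List.Nodup.idxOf_getElem hnd j hj2]
  have e2 : (invPerm s).idxOf (j + 1) = s[j] - 1 := by
    rw [← e1, List.Nodup.idxOf_getElem hnd2 _ hmlt]
  rw [e2]
  omega

lemma invPerm_inj {n : ℕ} {s s' : List ℕ} (h : IsPermWord n s) (h' : IsPermWord n s')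
    (heq : invPerm s = invPerm s') : s = s' := by
  rw [← invPerm_invPerm h, ← invPerm_invPerm h', heq]

lemma shape_P_pos : ∀ (t : Tree ℕ), IsDecreasing t → (inorder t).Nodup →
    ∀ s : List ℕ, s.Pairwise (· < ·) → s.Perm (inorder t) →
    shape (P (s.map (fun x => (inorder t).idxOf x))) = shape t := by
  intro t
  induction t with
  | nil =>
    intro _ _ s _ hsp
    have : s = [] := hsp.eq_nil
    subst this
    rfl
  | node a l r ihl ihr =>
    intro hdec hnd s hs hsp
    obtain ⟨hla, hra, hdl, hdr⟩ := hdec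
    simp only [inorder] at hnd hsp ⊢
    set wl := inorder l with hwl
    set wr := inorder r with hwr
    have hmid := List.nodup_middle.1 hnd
    rw [List.nodup_cons] at hmid
    obtain ⟨hamem, hlr⟩ := hmid
    rw [List.nodup_append] at hlr
    obtain ⟨hndl, hndr, hdisj⟩ := hlr
    have hawl : a ∉ wl := fun h => hamem (List.mem_append.2 (Or.inl h))
    have hawr : a ∉ wr := fun h => hamem (List.mem_append.2 (Or.inr h))
    -- s ends with a
    rcases List.eq_nil_or_concat s with rfl | ⟨s', b, rfl⟩
    · exact absurd (hsp.symm.eq_nil) (by simp)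
    rw [List.concat_eq_append] at hsp hs ⊢
    obtain ⟨hs', -, hmix⟩ := List.pairwise_append.1 hs
    have hba : b = a := by
      have hbw : b ∈ wl ++ a :: wr := hsp.subset (by simp)
      have haS : a ∈ s' ++ [b] := hsp.symm.subset (by simp)
      rcases List.mem_append.1 hbw with hbl | hbr
      · exfalso
        have hb_lt : b < a := hla b hbl
        rcases List.mem_append.1 haS with hal | hab
        · exact absurd (hmix a hal b (by simp)) (by omega)
        · simp at hab; omega
      · rcases List.mem_cons.1 hbr with h | hbr2
        · exact h
        · exfalso
          have hb_lt : b < a := hra b hbr2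
          rcases List.mem_append.1 haS with hal | hab
          · exact absurd (hmix a hal b (by simp)) (by omega)
          · simp at hab; omega
    subst hba
    -- s' is b permutation of wl ++ wr
    have hps' : s'.Perm (wl ++ wr) := by
      have h1 : (s' ++ [b]).Perm (b :: s') := by
        have := @List.perm_middle ℕ b s' []
        simpa using this
      have h2 : (wl ++ b :: wr).Perm (b :: (wl ++ wr)) := List.perm_middle
      exact (h1.symm.trans (hsp.trans h2)).cons_inv
    set w := wl ++ b :: wr with hw
    set f : ℕ → ℕ := fun x => w.idxOf x with hf
    have hp : f b = wl.length := by
      rw [hf]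
      simp only [hw]
      rw [List.idxOf_append_of_notMem hawl, List.idxOf_cons_self]
      omega
    have hfl : ∀ x ∈ wl, f x = wl.idxOf x := by
      intro x hx
      rw [hf]; simp only [hw]; exact List.idxOf_append_of_mem hx
    have hfr : ∀ x ∈ wr, f x = wr.idxOf x + (wl.length + 1) := by
      intro x hx
      have hxnl : x ∉ wl := fun h => hdisj _ h _ hx rfl
      have hxa : b ≠ x := fun h => hawr (h ▸ hx)
      rw [hf]; simp only [hw]
      rw [List.idxOf_append_of_notMem hxnl, List.idxOf_cons_ne _ hxa]
      omega
    have hmaps : (s' ++ [b]).map f = s'.map f ++ [wl.length] := by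
      rw [List.map_append]; simp [hp]
    rw [hmaps, P_concat]
    have hmem2 : ∀ x ∈ s', x ∈ wl ∨ x ∈ wr := by
      intro x hx
      exact List.mem_append.1 (hps'.subset hx)
    -- left filter
    have hleft : (s'.map f).filter (fun x => x ≤ wl.length) =
        (s'.filter (fun x => x ∈ wl)).map (fun x => wl.idxOf x) := by
      rw [List.filter_map]
      have e1 : s'.filter ((fun x => decide (x ≤ wl.length)) ∘ f) =
          s'.filter (fun x => x ∈ wl) := by
        apply List.filter_congr
        intro x hx
        rcases hmem2 x hx with hxl | hxr
        · have h1 : wl.idxOf x < wl.length := List.idxOf_lt_length_iff.2 hxl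
          simp only [Function.comp_apply, hfl x hxl]
          simp [hxl]
          omega
        · have hxnl : x ∉ wl := fun h => hdisj _ h _ hxr rfl
          simp only [Function.comp_apply, hfr x hxr]
          simp [hxnl]
          omega
      rw [e1]
      apply List.map_congr_left
      intro x hx
      have hxl : x ∈ wl := by
        have := (List.mem_filter.1 hx).2
        simpa using this
      exact hfl x hxl
    -- right filter
    have hright : (s'.map f).filter (fun x => ¬ x ≤ wl.length) =
        ((s'.filter (fun x => x ∈ wr)).map (fun x => wr.idxOf x)).map
          (· + (wl.length + 1)) := by
      rw [List.filter_map]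
      have e1 : s'.filter ((fun x => decide ¬(x ≤ wl.length)) ∘ f) =
          s'.filter (fun x => x ∈ wr) := by
        apply List.filter_congr
        intro x hx
        rcases hmem2 x hx with hxl | hxr
        · have h1 : wl.idxOf x < wl.length := List.idxOf_lt_length_iff.2 hxl
          have hxnr : x ∉ wr := fun h => hdisj _ hxl _ h rfl
          simp only [Function.comp_apply, hfl x hxl]
          simp [hxnr]
          omega
        · simp only [Function.comp_apply, hfr x hxr]
          simp [hxr]
          omega
      rw [e1, List.map_map]
      apply List.map_congr_left
      intro x hx
      have hxr : x ∈ wr := by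
        have := (List.mem_filter.1 hx).2
        simpa using this
      simp only [Function.comp_apply]
      rw [hfr x hxr]
    -- the filtered lists are permutations of wl, wr
    have hpl : (s'.filter (fun x => x ∈ wl)).Perm wl := by
      have hperm := hps'.filter (fun x => decide (x ∈ wl))
      rw [List.filter_append] at hperm
      have e2 : wl.filter (fun x => decide (x ∈ wl)) = wl :=
        List.filter_eq_self.2 (fun x hx => by simpa using hx)
      have e3 : wr.filter (fun x => decide (x ∈ wl)) = [] :=
        List.filter_eq_nil_iff.2 (fun x hx => by
          simp only [decide_eq_true_eq]
          exact fun h => hdisj _ h _ hx rfl)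
      rw [e2, e3, List.append_nil] at hperm
      exact hperm
    have hpr : (s'.filter (fun x => x ∈ wr)).Perm wr := by
      have hperm := hps'.filter (fun x => decide (x ∈ wr))
      rw [List.filter_append] at hperm
      have e2 : wr.filter (fun x => decide (x ∈ wr)) = wr :=
        List.filter_eq_self.2 (fun x hx => by simpa using hx)
      have e3 : wl.filter (fun x => decide (x ∈ wr)) = [] :=
        List.filter_eq_nil_iff.2 (fun x hx => by
          simp only [decide_eq_true_eq]
          exact fun h => hdisj _ hx _ h rfl)
      rw [e2, e3, List.nil_append] at hperm
      exact hperm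
    have ihL := ihl hdl hndl _ (hs'.filter _) hpl
    have ihR := ihr hdr hndr _ (hs'.filter _) hpr
    rw [hleft, hright, P_map_add]
    simp only [shape, shapeTmap]
    rw [ihL, ihR]

lemma shape_P_invPerm {n : ℕ} {t : Tree ℕ} (hdec : IsDecreasing t)
    (hperm : (inorder t).Perm (List.range' 1 n)) :
    shape (P (invPerm (inorder t))) = shape t := by
  set w := inorder t with hwdef
  have hlen : w.length = n := by simpa using hperm.length_eq
  have hnd : w.Nodup := (hperm.nodup_iff).2 (List.nodup_range' (s := 1) (n := n))
  have e : invPerm w = (List.map (fun x => w.idxOf x) (List.range' 1 n)).map (· + 1) := by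
    apply List.ext_getElem
    · simp [invPerm, hlen]
    · intro j h1 h2
      simp only [invPerm, List.getElem_map, List.getElem_range, List.getElem_range']
      simp [Nat.add_comm]
  rw [e, P_map_add, shapeTmap]
  exact shape_P_pos t hdec hnd _ (List.pairwise_lt_range' (s := 1) (n := n)) hperm.symm

end Sylv

/-- `w ↦ (P(w), Q(w))` is injective on words, and on permutations of
`{1,…,n}` it is a bijection onto pairs of a tree shape and a decreasing tree of that shape. -/
theorem stmt17 {α : Type*} [LinearOrder α] [Inhabited α] :
    (∀ u v : List α, Sylv.P u = Sylv.P v →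
      (∃ t : Tree ℕ, Sylv.IsDecrTreeOf (Sylv.invPerm (Sylv.std u)) t ∧
          Sylv.IsDecrTreeOf (Sylv.invPerm (Sylv.std v)) t) → u = v) ∧
    (∀ (n : ℕ) (T : Tree Unit) (t : Tree ℕ), Sylv.shape t = T →
      Sylv.IsDecreasing t → (Sylv.inorder t).Perm (List.range' 1 n) →
      ∃! σ : List ℕ, Sylv.IsPermWord n σ ∧ Sylv.shape (Sylv.P σ) = T ∧
        Sylv.IsDecrTreeOf (Sylv.invPerm σ) t) := by
  constructor
  · rintro u v hPuv ⟨t, ⟨-, h1⟩, ⟨-, h2⟩⟩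
    have hinv : Sylv.invPerm (Sylv.std u) = Sylv.invPerm (Sylv.std v) := by
      rw [← h1, ← h2]
    have hlen : u.length = v.length := by
      have h3 := congrArg List.length hinv
      rw [Sylv.invPerm_length, Sylv.invPerm_length, Sylv.std_length, Sylv.std_length] at h3
      exact h3
    have hstd : Sylv.std u = Sylv.std v := by
      refine Sylv.invPerm_inj (n := u.length) (Sylv.std_isPermWord u) ?_ hinv
      rw [hlen]; exact Sylv.std_isPermWord v
    have hperm : u.Perm v :=
      (Sylv.inorder_P_perm u).symm.trans (by rw [hPuv]; exact Sylv.inorder_P_perm v)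
    have hsort : u.mergeSort (· ≤ ·) = v.mergeSort (· ≤ ·) :=
      List.Perm.eq_of_pairwise' (r := (· ≤ ·))
        (Sylv.sorted_mergeSort_le u) (Sylv.sorted_mergeSort_le v)
        ((List.mergeSort_perm u _).trans (hperm.trans (List.mergeSort_perm v _).symm))
    apply List.ext_getElem hlen
    intro i hi1 hi2
    rw [← List.getD_eq_getElem u default hi1, ← List.getD_eq_getElem v default hi2,
      ← Sylv.std_recover u hi1, ← Sylv.std_recover v hi2, hstd, hsort]
  · intro n T t hshape hdec hperm
    have hpw : Sylv.IsPermWord n (Sylv.inorder t) := hperm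
    refine ⟨Sylv.invPerm (Sylv.inorder t),
      ⟨Sylv.invPerm_isPermWord hpw, ?_, hdec, ?_⟩, ?_⟩
    · rw [← hshape]
      exact Sylv.shape_P_invPerm hdec hperm
    · rw [Sylv.invPerm_invPerm hpw]
    · rintro σ' ⟨hp', -, -, hino'⟩
      calc σ' = Sylv.invPerm (Sylv.invPerm σ') := (Sylv.invPerm_invPerm hp').symm
        _ = Sylv.invPerm (Sylv.inorder t) := by rw [← hino']
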